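/- arXiv:2006.15529 — 2 statements merged into one kernel-verified Lean document; each statement's English description precedes it below -/
import Mathlib

section
/- For all l ∈ [0, π_2/2], the derivative of sleaf_2 satisfies sleaf_2'(l) = √(1 - sleaf_2(l)⁴). -/
/-!
On `[0, 1]` the function `arcsleaf r = ∫₀ʳ dt / √(1 - t⁴)` is continuous and strictly increasing
onto `[0, π₂/2]`, so its inverse `sleaf` is strictly increasing and continuous there. Below
`π₂/2` the inverse function rule gives `sleaf' = 1 / arcsleaf' ∘ sleaf = √(1 - sleaf⁴)`
(one-sidedly at `0`). At `π₂/2` the integrand blows up, but `1 - t⁴ ≤ 4 (1 - t)` gives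
`π₂/2 - arcsleaf r ≥ √(1 - r)`, i.e. `1 - sleaf l ≤ (π₂/2 - l)²`, so the one-sided derivative
there is `0 = √(1 - 1⁴)`. Integrability at `1` comes from `1 - t ≤ 1 - t⁴`.
-/

open Set Filter Topology Asymptotics MeasureTheory intervalIntegral Real

theorem MonotoneOn.strictMonoOn_of_rightInvOn {α β : Type*} [LinearOrder α] [LinearOrder β]
    {f : α → β} {g : β → α} {s : Set β} {t : Set α} (hf : MonotoneOn f t) (hg : MapsTo g s t)
    (hfg : RightInvOn g f s) : StrictMonoOn g s := by
  intro a ha b hb hab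
  by_contra! hle
  have := hf (hg hb) (hg ha) hle
  rw [hfg ha, hfg hb] at this
  exact hab.not_ge this

theorem StrictMonoOn.continuousOn_of_surjOn {α β : Type*} [LinearOrder α] [TopologicalSpace α]
    [OrderTopology α] [LinearOrder β] [TopologicalSpace β] [OrderTopology β]
    {f : α → β} {s : Set α} {t : Set β} [s.OrdConnected] [t.OrdConnected]
    (hf : StrictMonoOn f s) (hmaps : MapsTo f s t) (hsurj : SurjOn f s t) : ContinuousOn f s := by
  have hmono : StrictMono (hmaps.restrict f s t) := fun a b hab => hf a.2 b.2 hab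
  have hsurj' : Function.Surjective (hmaps.restrict f s t) :=
    hmaps.restrict_surjective_iff.2 hsurj
  rw [continuousOn_iff_continuous_domRestrict]
  exact continuous_subtype_val.comp (hmono.orderIsoOfSurjective _ hsurj').continuous

theorem HasDerivWithinAt.of_local_left_inverse {𝕜 : Type*} [NontriviallyNormedField 𝕜]
    {f g : 𝕜 → 𝕜} {f' a : 𝕜} {s t : Set 𝕜} (hg : Tendsto g (𝓝[s] a) (𝓝[t] (g a)))
    (hf : HasDerivWithinAt f f' t (g a)) (hf' : f' ≠ 0) (ha : a ∈ s)
    (hfg : ∀ᶠ x in 𝓝[s] a, f (g x) = x) : HasDerivWithinAt g f'⁻¹ s a :=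
  HasFDerivWithinAt.of_local_left_inverse
    (f' := ContinuousLinearEquiv.unitsEquivAut 𝕜 (Units.mk0 f' hf')) hg hf ha hfg

theorem HasDerivWithinAt.zero_of_norm_sub_le_sq {𝕜 F : Type*} [NontriviallyNormedField 𝕜]
    [NormedAddCommGroup F] [NormedSpace 𝕜 F] {f : 𝕜 → F} {s : Set 𝕜} {a : 𝕜} {C : ℝ}
    (hf : ∀ y ∈ s, ‖f y - f a‖ ≤ C * ‖y - a‖ ^ 2) : HasDerivWithinAt f 0 s a := by
  refine .of_isLittleO (IsBigO.trans_isLittleO ?_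
    ((isLittleO_pow_sub_sub a one_lt_two).mono nhdsWithin_le_nhds))
  refine IsBigO.of_bound C (eventually_nhdsWithin_of_forall fun y hy => ?_)
  simpa using (hf y hy).trans (by gcongr)

noncomputable def arcsleaf (x : ℝ) : ℝ := ∫ t in (0:ℝ)..x, 1 / √(1 - t ^ 4)

lemma one_div_sqrt_one_sub_pow_four_le_one_sub_rpow {t : ℝ} (ht : t ∈ Icc (0:ℝ) 1) :
    1 / √(1 - t ^ 4) ≤ (1 - t) ^ (-(1/2) : ℝ) := by
  obtain ⟨h0, h1 | rfl⟩ := And.imp_right le_iff_lt_or_eq.mp ht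
  · rw [rpow_neg (by linarith), ← sqrt_eq_rpow, ← one_div]
    exact one_div_le_one_div_of_le (sqrt_pos.2 (by linarith))
      (sqrt_le_sqrt (by nlinarith [pow_le_one₀ h0 h1.le (n := 3)]))
  · norm_num

lemma one_sub_rpow_neg_half_div_two_le_one_div_sqrt {t : ℝ} (ht : t ∈ Icc (0:ℝ) 1) :
    (1 - t) ^ (-(1/2) : ℝ) / 2 ≤ 1 / √(1 - t ^ 4) := by
  obtain ⟨h0, h1 | rfl⟩ := And.imp_right le_iff_lt_or_eq.mp ht
  · have hpos : 0 < 1 - t ^ 4 := sub_pos.2 (pow_lt_one₀ h0 h1 four_ne_zero)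
    have hle : √(1 - t ^ 4) ≤ √(2 ^ 2 * (1 - t)) :=
      sqrt_le_sqrt (by nlinarith [pow_le_one₀ h0 h1.le (n := 2), pow_le_one₀ h0 h1.le (n := 3)])
    rw [sqrt_mul (by norm_num), sqrt_sq (by norm_num)] at hle
    rw [rpow_neg (by linarith), ← sqrt_eq_rpow, ← one_div, div_div, mul_comm]
    exact one_div_le_one_div_of_le (sqrt_pos.2 hpos) hle
  · norm_num

lemma intervalIntegrable_one_sub_rpow {p : ℝ} (hp : -1 < p) (a b : ℝ) :
    IntervalIntegrable (fun t : ℝ => (1 - t) ^ p) volume a b := by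
  simpa only [sub_sub_cancel] using
    (intervalIntegrable_rpow' hp (a := 1 - a) (b := 1 - b)).comp_sub_left 1

lemma integral_one_sub_rpow {p : ℝ} (hp : -1 < p) (r : ℝ) :
    ∫ t in r..1, (1 - t) ^ p = (1 - r) ^ (p + 1) / (p + 1) := by
  rw [integral_comp_sub_left (fun x => x ^ p), sub_self, integral_rpow (.inl hp),
    zero_rpow (by linarith)]
  ring

lemma intervalIntegrable_one_div_sqrt_one_sub_pow_four {a b : ℝ} (ha : a ∈ Icc (0:ℝ) 1)
    (hb : b ∈ Icc (0:ℝ) 1) : IntervalIntegrable (fun t : ℝ => 1 / √(1 - t ^ 4)) volume a b := by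
  have h01 : IntervalIntegrable (fun t : ℝ => 1 / √(1 - t ^ 4)) volume 0 1 := by
    refine (intervalIntegrable_one_sub_rpow (by norm_num : (-1:ℝ) < -(1/2)) 0 1).mono_fun
      (Measurable.aestronglyMeasurable (by fun_prop))
      (ae_restrict_of_forall_mem measurableSet_uIoc fun t ht => ?_)
    rw [uIoc_of_le zero_le_one] at ht
    have hle := one_div_sqrt_one_sub_pow_four_le_one_sub_rpow ⟨ht.1.le, ht.2⟩
    dsimp only
    rwa [norm_of_nonneg (by positivity), norm_of_nonneg (rpow_nonneg (by linarith [ht.2]) _)]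
  refine h01.mono_set ?_
  rw [uIcc_of_le zero_le_one]
  exact uIcc_subset_Icc ha hb

lemma arcsleaf_sub_arcsleaf {a b : ℝ} (ha : a ∈ Icc (0:ℝ) 1) (hb : b ∈ Icc (0:ℝ) 1) :
    arcsleaf b - arcsleaf a = ∫ t in a..b, 1 / √(1 - t ^ 4) :=
  integral_interval_sub_left
    (intervalIntegrable_one_div_sqrt_one_sub_pow_four (left_mem_Icc.2 zero_le_one) hb)
    (intervalIntegrable_one_div_sqrt_one_sub_pow_four (left_mem_Icc.2 zero_le_one) ha)

lemma arcsleaf_strictMonoOn : StrictMonoOn arcsleaf (Icc 0 1) := by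
  intro a ha b hb hab
  rw [← sub_pos, arcsleaf_sub_arcsleaf ha hb]
  refine intervalIntegral_pos_of_pos_on (intervalIntegrable_one_div_sqrt_one_sub_pow_four ha hb)
    (fun t ht => ?_) hab
  have : 0 < √(1 - t ^ 4) :=
    sqrt_pos.2 (sub_pos.2 (pow_lt_one₀ (ha.1.trans ht.1.le) (ht.2.trans_le hb.2) four_ne_zero))
  positivity

lemma sqrt_one_sub_le_arcsleaf_one_sub {r : ℝ} (hr : r ∈ Icc (0:ℝ) 1) :
    √(1 - r) ≤ arcsleaf 1 - arcsleaf r :=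
  calc √(1 - r) = ∫ t in r..1, (1 - t) ^ (-(1/2) : ℝ) / 2 := by
        rw [intervalIntegral.integral_div, integral_one_sub_rpow (by norm_num), sqrt_eq_rpow]
        ring_nf
    _ ≤ ∫ t in r..1, 1 / √(1 - t ^ 4) :=
        integral_mono_on hr.2 ((intervalIntegrable_one_sub_rpow (by norm_num) r 1).div_const 2)
          (intervalIntegrable_one_div_sqrt_one_sub_pow_four hr (right_mem_Icc.2 zero_le_one))
          fun t ht => one_sub_rpow_neg_half_div_two_le_one_div_sqrt ⟨hr.1.trans ht.1, ht.2⟩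
    _ = arcsleaf 1 - arcsleaf r := (arcsleaf_sub_arcsleaf hr (right_mem_Icc.2 zero_le_one)).symm

lemma hasDerivAt_arcsleaf {r : ℝ} (hr : r ∈ Ico (0:ℝ) 1) :
    HasDerivAt arcsleaf (1 / √(1 - r ^ 4)) r := by
  have : 0 < √(1 - r ^ 4) := sqrt_pos.2 (sub_pos.2 (pow_lt_one₀ hr.1 hr.2 four_ne_zero))
  exact integral_hasDerivAt_right
    (intervalIntegrable_one_div_sqrt_one_sub_pow_four (left_mem_Icc.2 zero_le_one) ⟨hr.1, hr.2.le⟩)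
    (Measurable.aestronglyMeasurable (by fun_prop)).stronglyMeasurableAtFilter
    (by fun_prop (disch := exact this.ne'))

lemma arcsleaf_zero : arcsleaf 0 = 0 := integral_same

lemma arcsleaf_one_pos : 0 < arcsleaf 1 :=
  arcsleaf_zero ▸ arcsleaf_strictMonoOn (left_mem_Icc.2 zero_le_one) (right_mem_Icc.2 zero_le_one)
    zero_lt_one

lemma arcsleaf_mapsTo : MapsTo arcsleaf (Icc 0 1) (Icc 0 (arcsleaf 1)) := fun _ hr =>
  ⟨arcsleaf_zero ▸ arcsleaf_strictMonoOn.monotoneOn (left_mem_Icc.2 zero_le_one) hr hr.1,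
    arcsleaf_strictMonoOn.monotoneOn hr (right_mem_Icc.2 zero_le_one) hr.2⟩

section RightInverse

variable {g : ℝ → ℝ}

lemma hasDerivWithinAt_zero_of_rightInvOn_arcsleaf
    (hmaps : MapsTo g (Icc 0 (arcsleaf 1)) (Icc 0 1))
    (hinv : RightInvOn g arcsleaf (Icc 0 (arcsleaf 1))) (hg1 : g (arcsleaf 1) = 1) :
    HasDerivWithinAt g 0 (Icc 0 (arcsleaf 1)) (arcsleaf 1) := by
  refine HasDerivWithinAt.zero_of_norm_sub_le_sq (C := 1) fun y hy => ?_
  have h := sqrt_one_sub_le_arcsleaf_one_sub (hmaps hy)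
  rw [hinv hy, sqrt_le_iff] at h
  rw [hg1, norm_sub_rev, norm_of_nonneg (by linarith [(hmaps hy).2]), norm_sub_rev, one_mul,
    Real.norm_eq_abs, sq_abs]
  exact h.2

lemma hasDerivWithinAt_of_rightInvOn_arcsleaf
    (hmaps : MapsTo g (Icc 0 (arcsleaf 1)) (Icc 0 1))
    (hinv : RightInvOn g arcsleaf (Icc 0 (arcsleaf 1))) {l : ℝ} (hl : l ∈ Icc 0 (arcsleaf 1)) :
    HasDerivWithinAt g (√(1 - g l ^ 4)) (Icc 0 (arcsleaf 1)) l := by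
  have hleft : LeftInvOn g arcsleaf (Icc 0 1) :=
    arcsleaf_strictMonoOn.injOn.rightInvOn_of_leftInvOn hinv arcsleaf_mapsTo hmaps
  have hmono := arcsleaf_strictMonoOn.monotoneOn.strictMonoOn_of_rightInvOn hmaps hinv
  have hg1 : g (arcsleaf 1) = 1 := hleft (right_mem_Icc.2 zero_le_one)
  rcases hl.2.lt_or_eq with hlt | rfl
  · have hgl : g l < 1 := hg1 ▸ hmono hl (right_mem_Icc.2 arcsleaf_one_pos.le) hlt
    have hcont := hmono.continuousOn_of_surjOn hmaps (hleft.surjOn arcsleaf_mapsTo)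
    have hpos : 0 < √(1 - g l ^ 4) :=
      sqrt_pos.2 (sub_pos.2 (pow_lt_one₀ (hmaps hl).1 hgl four_ne_zero))
    have h := (hasDerivAt_arcsleaf ⟨(hmaps hl).1, hgl⟩).hasDerivWithinAt.of_local_left_inverse
      ((hcont l hl).tendsto_nhdsWithin hmaps) (one_div_pos.2 hpos).ne' hl
      (eventually_nhdsWithin_of_forall hinv)
    rwa [one_div, inv_inv] at h
  · rw [hg1, one_pow, sub_self, sqrt_zero]
    exact hasDerivWithinAt_zero_of_rightInvOn_arcsleaf hmaps hinv hg1

end RightInverse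

theorem sleaf_deriv (π₂ : ℝ) (hπ : π₂ = 2 * ∫ t in (0:ℝ)..1, 1 / Real.sqrt (1 - t ^ 4))
    (sleaf : ℝ → ℝ)
    (hs : ∀ l ∈ Set.Icc 0 (π₂ / 2), sleaf l ∈ Set.Icc (0:ℝ) 1 ∧
      (∫ t in (0:ℝ)..(sleaf l), 1 / Real.sqrt (1 - t ^ 4)) = l) :
    ∀ l ∈ Set.Icc 0 (π₂ / 2),
      derivWithin sleaf (Set.Icc 0 (π₂ / 2)) l = Real.sqrt (1 - (sleaf l) ^ 4) := by
  have hL : π₂ / 2 = arcsleaf 1 := by rw [hπ, arcsleaf]; ring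
  rw [hL] at hs ⊢
  intro l hl
  have hderiv := hasDerivWithinAt_of_rightInvOn_arcsleaf (fun l hl => (hs l hl).1)
    (fun l hl => (hs l hl).2) hl
  exact hderiv.derivWithin (uniqueDiffOn_Icc arcsleaf_one_pos l hl)
end

section
/- For all l ∈ [0, π_2/2], ∫_0^l sleaf_2(t) dt = π/4 - arctan(cleaf_2(l)). -/
/-!
Write `arcsl x = ∫₀ˣ dt / √(1 - t⁴)`; the hypotheses say `arcsl (sleaf l) = l` and
`arcsl 1 - arcsl (cleaf l) = l`. The decreasing substitution `t = φ r = √(1 - r⁴) / (1 + r²)`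
(`lemnComplement`, from `sl² = (1 - cl²) / (1 + cl²)`) satisfies `dt / √(1 - t⁴) = -dr / √(1 - r⁴)`,
so `arcsl (φ r) = arcsl 1 - arcsl r` and hence `sleaf (arcsl 1 - arcsl r) = φ r`. Substituting
`t = arcsl 1 - arcsl r` in `∫₀ˡ sleaf t dt` turns it into `∫ φ r dr / √(1 - r⁴) = ∫ dr / (1 + r²)`
over `[cleaf l, 1]`, which is `π/4 - arctan (cleaf l)`.
-/

open Set MeasureTheory intervalIntegral

noncomputable def arcslIntegrand (t : ℝ) : ℝ := 1 / √(1 - t ^ 4)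

noncomputable def arcsl (x : ℝ) : ℝ := ∫ t in (0:ℝ)..x, arcslIntegrand t

noncomputable def lemnComplement (r : ℝ) : ℝ := √(1 - r ^ 4) / (1 + r ^ 2)

lemma one_sub_pow_four_pos {t : ℝ} (ht : t ∈ Ioo (-1) 1) : 0 < 1 - t ^ 4 := by
  have : 0 < 1 - t ^ 2 := by nlinarith [ht.1, ht.2]
  nlinarith

lemma arcslIntegrand_nonneg (t : ℝ) : 0 ≤ arcslIntegrand t := by
  unfold arcslIntegrand; positivity

lemma arcslIntegrand_pos {t : ℝ} (ht : t ∈ Ioo (-1) 1) : 0 < arcslIntegrand t := by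
  have := Real.sqrt_pos.2 (one_sub_pow_four_pos ht)
  unfold arcslIntegrand; positivity

lemma continuousOn_arcslIntegrand : ContinuousOn arcslIntegrand (Ioo (-1) 1) := by
  intro t ht
  refine (continuousAt_const.div (by fun_prop) ?_).continuousWithinAt
  exact (Real.sqrt_pos.2 (one_sub_pow_four_pos ht)).ne'

lemma intervalIntegrable_arcslIntegrand : IntervalIntegrable arcslIntegrand volume 0 1 := by
  have hbound : IntervalIntegrable (fun x : ℝ => (1 - x) ^ (-(1 / 2) : ℝ)) volume 0 1 := by
    simpa using ((intervalIntegrable_rpow' (a := 0) (b := 1) (r := -(1 / 2))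
      (by norm_num)).comp_sub_left 1).symm
  have hmeas : Measurable arcslIntegrand := by unfold arcslIntegrand; fun_prop
  refine hbound.mono_fun hmeas.aestronglyMeasurable ?_
  rw [uIoc_of_le zero_le_one]
  refine (ae_restrict_iff' measurableSet_Ioc).2 (Filter.Eventually.of_forall fun x hx => ?_)
  dsimp only
  rw [Real.norm_of_nonneg (arcslIntegrand_nonneg x),
    Real.norm_of_nonneg (Real.rpow_nonneg (by linarith [hx.2]) _)]
  rcases hx.2.eq_or_lt with rfl | hx1
  · simp [arcslIntegrand]
  · have h1x : 0 < 1 - x := by linarith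
    rw [Real.rpow_neg h1x.le, ← Real.sqrt_eq_rpow, arcslIntegrand, one_div]
    exact inv_anti₀ (Real.sqrt_pos.2 h1x)
      (Real.sqrt_le_sqrt (by nlinarith [pow_le_of_le_one hx.1.le hx1.le (by norm_num : 4 ≠ 0)]))

lemma intervalIntegrable_arcslIntegrand_of_mem {a b : ℝ} (ha : a ∈ Icc (0:ℝ) 1)
    (hb : b ∈ Icc (0:ℝ) 1) : IntervalIntegrable arcslIntegrand volume a b :=
  intervalIntegrable_arcslIntegrand.mono_set <| by
    rw [uIcc_of_le zero_le_one]; exact uIcc_subset_Icc ha hb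

lemma arcsl_zero : arcsl 0 = 0 := integral_same

lemma arcsl_sub_arcsl {a b : ℝ} (ha : a ∈ Icc (0:ℝ) 1) (hb : b ∈ Icc (0:ℝ) 1) :
    arcsl b - arcsl a = ∫ t in a..b, arcslIntegrand t :=
  have h0 : (0:ℝ) ∈ Icc 0 1 := left_mem_Icc.2 zero_le_one
  integral_interval_sub_left (intervalIntegrable_arcslIntegrand_of_mem h0 hb)
    (intervalIntegrable_arcslIntegrand_of_mem h0 ha)

lemma hasDerivAt_arcsl {x : ℝ} (hx : x ∈ Ioo (-1) 1) : HasDerivAt arcsl (arcslIntegrand x) x := by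
  have hsub : uIcc 0 x ⊆ Ioo (-1) 1 := ordConnected_Ioo.uIcc_subset ⟨by norm_num, by norm_num⟩ hx
  exact integral_hasDerivAt_right ((continuousOn_arcslIntegrand.mono hsub).intervalIntegrable)
    (continuousOn_arcslIntegrand.stronglyMeasurableAtFilter isOpen_Ioo x hx)
    (continuousOn_arcslIntegrand.continuousAt (isOpen_Ioo.mem_nhds hx))

lemma continuousOn_arcsl : ContinuousOn arcsl (Icc 0 1) := by
  have h := continuousOn_primitive_interval' intervalIntegrable_arcslIntegrand left_mem_uIcc
  rw [uIcc_of_le zero_le_one] at h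
  exact h

lemma strictMonoOn_arcsl : StrictMonoOn arcsl (Icc 0 1) := by
  refine strictMonoOn_of_deriv_pos (convex_Icc 0 1) continuousOn_arcsl fun x hx => ?_
  rw [interior_Icc] at hx
  have hx' : x ∈ Ioo (-1) 1 := ⟨by linarith [hx.1], hx.2⟩
  rw [(hasDerivAt_arcsl hx').deriv]
  exact arcslIntegrand_pos hx'

lemma arcsl_mem_Icc {r : ℝ} (hr : r ∈ Icc (0:ℝ) 1) : arcsl r ∈ Icc 0 (arcsl 1) := by
  have hmono := strictMonoOn_arcsl.monotoneOn
  exact ⟨arcsl_zero ▸ hmono (left_mem_Icc.2 zero_le_one) hr hr.1,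
    hmono hr (right_mem_Icc.2 zero_le_one) hr.2⟩

lemma continuous_lemnComplement : Continuous lemnComplement :=
  Continuous.div (by fun_prop) (by fun_prop) fun r => by positivity

lemma lemnComplement_zero : lemnComplement 0 = 1 := by simp [lemnComplement]

lemma lemnComplement_mem_Icc (r : ℝ) : lemnComplement r ∈ Icc 0 1 := by
  refine ⟨by unfold lemnComplement; positivity, ?_⟩
  rw [lemnComplement, div_le_one (by positivity)]
  calc √(1 - r ^ 4) ≤ 1 := Real.sqrt_le_one.2 (by nlinarith [pow_two_nonneg (r ^ 2)])
    _ ≤ 1 + r ^ 2 := by nlinarith [sq_nonneg r]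

lemma hasDerivAt_lemnComplement {r : ℝ} (hr : r ∈ Ioo (-1) 1) :
    HasDerivAt lemnComplement (-(2 * r * arcslIntegrand r / (1 + r ^ 2))) r := by
  have hpos := one_sub_pow_four_pos hr
  have hs := Real.sqrt_pos.2 hpos
  have hs2 := Real.sq_sqrt hpos.le
  have hnum : HasDerivAt (fun r => √(1 - r ^ 4)) (-(4 * r ^ 3) / (2 * √(1 - r ^ 4))) r := by
    simpa using ((hasDerivAt_pow 4 r).const_sub 1).sqrt hpos.ne'
  have hden : HasDerivAt (fun r : ℝ => 1 + r ^ 2) (2 * r) r := by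
    simpa using (hasDerivAt_pow 2 r).const_add 1
  refine (hnum.div hden (by positivity)).congr_deriv ?_
  rw [arcslIntegrand]
  field_simp
  linear_combination (-4 * r) * hs2

lemma arcslIntegrand_lemnComplement {r : ℝ} (hr : r ∈ Ioc 0 1) :
    arcslIntegrand (lemnComplement r) = (1 + r ^ 2) / (2 * r) := by
  have hs2 : √(1 - r ^ 4) ^ 2 = 1 - r ^ 4 :=
    Real.sq_sqrt (sub_nonneg.2 (pow_le_one₀ hr.1.le hr.2))
  have hquad : 1 - lemnComplement r ^ 4 = (2 * r / (1 + r ^ 2)) ^ 2 := by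
    rw [lemnComplement, div_pow, show √(1 - r ^ 4) ^ 4 = (√(1 - r ^ 4) ^ 2) ^ 2 by ring, hs2]
    field_simp
    ring
  rw [arcslIntegrand, hquad, Real.sqrt_sq (by have := hr.1; positivity), one_div_div]

lemma lemnComplement_mul_arcslIntegrand {r : ℝ} (hr : r ∈ Ioo (-1) 1) :
    lemnComplement r * arcslIntegrand r = 1 / (1 + r ^ 2) := by
  have hs := (Real.sqrt_pos.2 (one_sub_pow_four_pos hr)).ne'
  rw [lemnComplement, arcslIntegrand]
  field_simp

lemma arcsl_lemnComplement {r : ℝ} (hr : r ∈ Icc 0 1) :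
    arcsl (lemnComplement r) = arcsl 1 - arcsl r := by
  have hIoo : ∀ s ∈ Ioo (min 0 r) (max 0 r), s ∈ Ioo 0 1 := fun s hs => by
    rw [min_eq_left hr.1, max_eq_right hr.1] at hs
    exact ⟨hs.1, hs.2.trans_le hr.2⟩
  have hsubst := integral_comp_mul_deriv_of_deriv_nonpos (g := arcslIntegrand)
    continuous_lemnComplement.continuousOn
    (fun s hs => hasDerivAt_lemnComplement ⟨by linarith [(hIoo s hs).1], (hIoo s hs).2⟩)
    (fun s hs => by
      have := (hIoo s hs).1
      have := arcslIntegrand_nonneg s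
      rw [neg_nonpos]; positivity)
  have hlhs : ∫ s in 0..r, (arcslIntegrand ∘ lemnComplement) s *
      -(2 * s * arcslIntegrand s / (1 + s ^ 2)) = -arcsl r := by
    rw [integral_congr_Ioo_of_le hr.1 (g := fun s => -arcslIntegrand s),
      intervalIntegral.integral_neg]
    · rfl
    intro s hs
    have hs0 := hs.1.ne'
    simp only [Function.comp_apply]
    rw [arcslIntegrand_lemnComplement ⟨hs.1, hs.2.le.trans hr.2⟩]
    field_simp
  rw [hlhs, lemnComplement_zero,
    ← arcsl_sub_arcsl (right_mem_Icc.2 zero_le_one) (lemnComplement_mem_Icc r)] at hsubst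
  linarith

lemma integral_eq_pi_div_four_sub_arctan {sl : ℝ → ℝ}
    (hsl : ∀ r ∈ Icc (0:ℝ) 1, sl (arcsl 1 - arcsl r) = lemnComplement r) {c : ℝ}
    (hc : c ∈ Icc (0:ℝ) 1) :
    ∫ t in (0:ℝ)..(arcsl 1 - arcsl c), sl t = Real.pi / 4 - Real.arctan c := by
  have hIoo : ∀ r ∈ Ioo (min c 1) (max c 1), r ∈ Ioo (-1) 1 := fun r hr => by
    rw [min_eq_left hc.2, max_eq_right hc.2] at hr
    exact ⟨by linarith [hc.1, hr.1], hr.2⟩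
  have hsubst := integral_comp_mul_deriv_of_deriv_nonpos (g := sl)
    (f := fun r => arcsl 1 - arcsl r) (continuousOn_const.sub (continuousOn_arcsl.mono (by
      rw [uIcc_of_le hc.2]; exact Icc_subset_Icc_left hc.1)))
    (fun r hr => (hasDerivAt_arcsl (hIoo r hr)).const_sub (arcsl 1))
    (fun r _ => neg_nonpos.2 (arcslIntegrand_nonneg r))
  have hlhs : ∫ r in c..1, (sl ∘ fun r => arcsl 1 - arcsl r) r * -arcslIntegrand r =
      -(Real.arctan 1 - Real.arctan c) := by
    rw [integral_congr_Ioo_of_le hc.2 (g := fun r => -(1 / (1 + r ^ 2))),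
      intervalIntegral.integral_neg, integral_one_div_one_add_sq]
    intro r hr
    simp only [Function.comp_apply]
    rw [hsl r ⟨hc.1.trans hr.1.le, hr.2.le⟩, mul_neg,
      lemnComplement_mul_arcslIntegrand ⟨by linarith [hc.1, hr.1], hr.2⟩]
  rw [hlhs, sub_self, integral_symm, Real.arctan_one] at hsubst
  linarith

theorem integral_sleaf (π₂ : ℝ) (hπ : π₂ = 2 * ∫ t in (0:ℝ)..1, 1 / Real.sqrt (1 - t ^ 4))
    (sleaf : ℝ → ℝ)
    (hs : ∀ l ∈ Set.Icc 0 (π₂ / 2), sleaf l ∈ Set.Icc (0:ℝ) 1 ∧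
      (∫ t in (0:ℝ)..(sleaf l), 1 / Real.sqrt (1 - t ^ 4)) = l)
    (cleaf : ℝ → ℝ)
    (hc : ∀ l ∈ Set.Icc 0 (π₂ / 2), cleaf l ∈ Set.Icc (0:ℝ) 1 ∧
      (∫ t in (cleaf l)..1, 1 / Real.sqrt (1 - t ^ 4)) = l) :
    ∀ l ∈ Set.Icc 0 (π₂ / 2),
      (∫ t in (0:ℝ)..l, sleaf t) = Real.pi / 4 - Real.arctan (cleaf l) := by
  have hhalf : π₂ / 2 = arcsl 1 := by rw [hπ]; simp only [arcsl, arcslIntegrand]; ring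
  have hsleaf : ∀ r ∈ Icc (0:ℝ) 1, sleaf (arcsl 1 - arcsl r) = lemnComplement r := by
    intro r hr
    have hmem : arcsl 1 - arcsl r ∈ Icc 0 (π₂ / 2) := by
      rw [hhalf]
      exact ⟨sub_nonneg.2 (arcsl_mem_Icc hr).2, sub_le_self _ (arcsl_mem_Icc hr).1⟩
    obtain ⟨hs_mem, hs_eq⟩ := hs _ hmem
    exact strictMonoOn_arcsl.injOn hs_mem (lemnComplement_mem_Icc r)
      (hs_eq.trans (arcsl_lemnComplement hr).symm)
  intro l hl
  obtain ⟨hc_mem, hc_eq⟩ := hc l hl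
  have hl_eq : arcsl 1 - arcsl (cleaf l) = l :=
    (arcsl_sub_arcsl hc_mem (right_mem_Icc.2 zero_le_one)).trans hc_eq
  simpa only [hl_eq] using integral_eq_pi_div_four_sub_arctan hsleaf hc_mem
end
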